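/- Let d be a compatible left-invariant metric on a metrisable topological group G. The following are equivalent: (1) d is metrically proper, i.e., d(g_n,1) → ∞ whenever g_n → ∞; (2) for every subset A ⊆ G, A has finite d-diameter if and only if A has property (OB) relative to G; (3) for every compatible left-invariant metric ∂ on G, the identity map (G,∂) → (G,d) is metrically proper; (4) for every compatible left-invariant metric ∂ on G, the identity map (G,d) → (G,∂) is bornologous. -/

import Mathlib

open Filter Topology
open scoped Pointwise

/-- A (plain) metric given as a distance function. -/
def IsMetric {G : Type*} (d : G → G → ℝ) : Prop :=
  (∀ x y, d x y = 0 ↔ x = y) ∧ (∀ x y, d x y = d y x) ∧ ∀ x y z, d x z ≤ d x y + d y z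

/-- The metric `d` induces the topology of `G`. -/
def IsCompatible (G : Type*) [TopologicalSpace G] (d : G → G → ℝ) : Prop :=
  ∀ (x : G) (s : Set G), s ∈ nhds x ↔ ∃ ε > (0 : ℝ), {y : G | d x y < ε} ⊆ s

/-- A compatible left-invariant metric on a topological group. -/
def IsCompatibleLeftInvariantMetric (G : Type*) [Group G] [TopologicalSpace G]
    (d : G → G → ℝ) : Prop :=
  IsMetric d ∧ IsCompatible G d ∧ ∀ h g f : G, d (h * g) (h * f) = d g f

/-- A set has finite diameter with respect to `d`. -/
def FiniteDiam {G : Type*} (d : G → G → ℝ) (A : Set G) : Prop :=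
  ∃ C : ℝ, ∀ x ∈ A, ∀ y ∈ A, d x y ≤ C

/-- `A` has property (OB) relative to `G`: finite diameter for every compatible
left-invariant metric. -/
def HasRelPropOB (G : Type*) [Group G] [TopologicalSpace G] (A : Set G) : Prop :=
  ∀ d : G → G → ℝ, IsCompatibleLeftInvariantMetric G d → FiniteDiam d A

/-- A sequence tends to infinity in `G` if some compatible left-invariant metric
witnesses `d (g n) 1 → ∞`. -/
def TendsToInfinity (G : Type*) [Group G] [TopologicalSpace G] (g : ℕ → G) : Prop :=
  ∃ d : G → G → ℝ, IsCompatibleLeftInvariantMetric G d ∧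
    Filter.Tendsto (fun n => d (g n) 1) Filter.atTop Filter.atTop

/-- A compatible left-invariant metric is metrically proper if `d (g n) 1 → ∞`
whenever `g n → ∞`. -/
def MetricallyProperMetric (G : Type*) [Group G] [TopologicalSpace G]
    (d : G → G → ℝ) : Prop :=
  ∀ g : ℕ → G, TendsToInfinity G g →
    Filter.Tendsto (fun n => d (g n) 1) Filter.atTop Filter.atTop

/-!
By left invariance `d x y = d (x⁻¹ * y) 1`, so a left-invariant metric is controlled by the
balls `{z | d z 1 ≤ b}` around the identity. Conditions (2)–(4) all say that these balls are
bounded for every other compatible left-invariant metric `e`, and (1) says the same thing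
sequentially: a sequence escaping every `d`-ball is unbounded for `e`, and conversely pairs
`x n, y n ∈ A` with `e (x n) (y n) ≥ n` give the sequence `(x n)⁻¹ * y n → ∞`.
-/

lemma IsMetric.nonneg {α : Type*} {d : α → α → ℝ} (hd : IsMetric d) (x y : α) :
    0 ≤ d x y := by
  have hxx : d x x = 0 := (hd.1 x x).2 rfl
  linarith [hd.2.2 x y x, hd.2.1 y x]

lemma IsMetric.finiteDiam_setOf_le {α : Type*} {d : α → α → ℝ} (hd : IsMetric d) (a : α)
    (b : ℝ) : FiniteDiam d {z | d z a ≤ b} :=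
  ⟨2 * b, fun x hx y hy => by linarith [hd.2.2 x a y, hd.2.1 a y, hx.out, hy.out]⟩

lemma FiniteDiam.of_bornologous {α : Type*} {d e : α → α → ℝ} {A : Set α}
    (hA : FiniteDiam d A)
    (hborn : ∀ R > (0 : ℝ), ∃ S > (0 : ℝ), ∀ x y : α, d x y ≤ R → e x y ≤ S) :
    FiniteDiam e A := by
  obtain ⟨C, hC⟩ := hA
  obtain ⟨S, -, hS⟩ := hborn (max C 1) (by positivity)
  exact ⟨S, fun x hx y hy => hS x y ((hC x hx y hy).trans (le_max_left _ _))⟩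

section LeftInvariant

variable {G : Type*} [Group G] {d e : G → G → ℝ}

lemma dist_eq_dist_inv_mul_one (hsymm : ∀ x y, d x y = d y x)
    (hl : ∀ h g f : G, d (h * g) (h * f) = d g f) (x y : G) :
    d x y = d (x⁻¹ * y) 1 := by
  rw [← hl x⁻¹ x y, inv_mul_cancel, hsymm]

lemma bornologous_of_forall_finiteDiam (hd : IsMetric d)
    (hdl : ∀ h g f : G, d (h * g) (h * f) = d g f) (he : IsMetric e)
    (hel : ∀ h g f : G, e (h * g) (h * f) = e g f)
    (hbdd : ∀ A : Set G, FiniteDiam d A → FiniteDiam e A) :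
    ∀ R > (0 : ℝ), ∃ S > (0 : ℝ), ∀ x y : G, d x y ≤ R → e x y ≤ S := by
  intro R hR
  set B := {z : G | d z 1 ≤ R}
  obtain ⟨C, hC⟩ := hbdd B (hd.finiteDiam_setOf_le 1 R)
  have hone : (1 : G) ∈ B := by
    change d 1 1 ≤ R
    rw [(hd.1 1 1).2 rfl]
    exact hR.le
  refine ⟨max C 1, by positivity, fun x y hxy => ?_⟩
  have hxy' : x⁻¹ * y ∈ B := by
    change d (x⁻¹ * y) 1 ≤ R
    rwa [← dist_eq_dist_inv_mul_one hd.2.1 hdl]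
  calc e x y = e (x⁻¹ * y) 1 := dist_eq_dist_inv_mul_one he.2.1 hel x y
    _ ≤ C := hC _ hxy' _ hone
    _ ≤ max C 1 := le_max_left _ _

lemma tendsto_dist_one_of_forall_finiteDiam (hd : IsMetric d)
    (hbdd : ∀ A : Set G, FiniteDiam d A → FiniteDiam e A) {g : ℕ → G}
    (hg : Tendsto (fun n => e (g n) 1) atTop atTop) :
    Tendsto (fun n => d (g n) 1) atTop atTop := by
  refine tendsto_atTop.2 fun b => ?_
  obtain ⟨C, hC⟩ := hbdd _ (hd.finiteDiam_setOf_le 1 b)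
  filter_upwards [hg.eventually_gt_atTop C] with n hn
  by_contra! hlt
  have hone : d 1 1 ≤ b := by
    rw [(hd.1 1 1).2 rfl]
    exact (hd.nonneg _ _).trans hlt.le
  linarith [hC (g n) hlt.le 1 hone]

lemma FiniteDiam.of_metricallyProper [TopologicalSpace G]
    (hprop : MetricallyProperMetric G d) (hsymm : ∀ x y, d x y = d y x)
    (hdl : ∀ h g f : G, d (h * g) (h * f) = d g f)
    (he : IsCompatibleLeftInvariantMetric G e) {A : Set G} (hA : FiniteDiam d A) :
    FiniteDiam e A := by
  obtain ⟨C, hC⟩ := hA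
  by_contra! hunbdd
  simp only [FiniteDiam, not_exists, not_forall, not_le] at hunbdd
  choose x hx y hy hxy using fun n : ℕ => hunbdd n
  have hesc : Tendsto (fun n => e ((x n)⁻¹ * y n) 1) atTop atTop := by
    refine tendsto_atTop_mono (fun n => ?_) tendsto_natCast_atTop_atTop
    rw [← dist_eq_dist_inv_mul_one he.1.2.1 he.2.2]
    exact (hxy n).le
  obtain ⟨n, hn⟩ := ((hprop _ ⟨e, he, hesc⟩).eventually_gt_atTop C).exists
  rw [← dist_eq_dist_inv_mul_one hsymm hdl] at hn
  linarith [hC _ (hx n) _ (hy n)]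

end LeftInvariant

theorem metrically_proper_tfae_general {G : Type*} [Group G] [TopologicalSpace G]
    (d : G → G → ℝ) (hd : IsCompatibleLeftInvariantMetric G d) :
    List.TFAE
      [ MetricallyProperMetric G d,
        ∀ A : Set G, FiniteDiam d A ↔ HasRelPropOB G A,
        ∀ e : G → G → ℝ, IsCompatibleLeftInvariantMetric G e →
          ∀ A : Set G, FiniteDiam d A → FiniteDiam e A,
        ∀ e : G → G → ℝ, IsCompatibleLeftInvariantMetric G e →
          ∀ R > (0 : ℝ), ∃ S > (0 : ℝ), ∀ x y : G, d x y ≤ R → e x y ≤ S ] := by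
  have hdm := hd.1
  have hdl := hd.2.2
  tfae_have 1 → 3 := fun h e he _ => FiniteDiam.of_metricallyProper h hdm.2.1 hdl he
  tfae_have 3 → 1 := fun h _ ⟨e, he, hg⟩ =>
    tendsto_dist_one_of_forall_finiteDiam hdm (h e he) hg
  tfae_have 2 → 3 := fun h e he A hA => (h A).1 hA e he
  tfae_have 3 → 2 := fun h A => ⟨fun hA e he => h e he A hA, fun hA => hA d hd⟩
  tfae_have 3 → 4 := fun h e he => bornologous_of_forall_finiteDiam hdm hdl he.1 he.2.2 (h e he)
  tfae_have 4 → 3 := fun h e he _ hA => hA.of_bornologous (h e he)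
  tfae_finish

theorem metrically_proper_tfae {G : Type*} [Group G] [TopologicalSpace G]
    [IsTopologicalGroup G] [TopologicalSpace.MetrizableSpace G]
    (d : G → G → ℝ) (hd : IsCompatibleLeftInvariantMetric G d) :
    List.TFAE
      [ MetricallyProperMetric G d,
        ∀ A : Set G, FiniteDiam d A ↔ HasRelPropOB G A,
        ∀ e : G → G → ℝ, IsCompatibleLeftInvariantMetric G e →
          ∀ A : Set G, FiniteDiam d A → FiniteDiam e A,
        ∀ e : G → G → ℝ, IsCompatibleLeftInvariantMetric G e →
          ∀ R > (0 : ℝ), ∃ S > (0 : ℝ), ∀ x y : G, d x y ≤ R → e x y ≤ S ] :=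
  metrically_proper_tfae_general d hd
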